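/- Let r ∈ ℕ, l ∈ ℤ, {a_k}_{k=0}^∞ ⊂ ℂ, and n, N ∈ ℕ with n ≤ N. If x ∈ ((2l+1)π/r, (2l+2)π/r), then |Σ_{k=n}^{N} a_k sin(kx)| ≤ (π/(2(2(l+1)π − rx))) · ( Σ_{k=n}^{N} |Δ_r a_k| + Σ_{k=N+1}^{N+r} |a_k| + Σ_{k=n}^{n+r−1} |a_k| ). -/

import Mathlib

noncomputable section

open Finset

theorem statement4 (r : ℕ) (hr : 1 ≤ r) (l : ℤ) (a : ℕ → ℂ) (n N : ℕ) (hnN : n ≤ N)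
    (x : ℝ) (hx₁ : (2 * l + 1) * Real.pi / r < x) (hx₂ : x < (2 * l + 2) * Real.pi / r) :
    ‖∑ k ∈ Finset.Icc n N, a k * (Real.sin (k * x) : ℂ)‖ ≤
      Real.pi / (2 * (2 * (l + 1) * Real.pi - r * x)) *
        (∑ k ∈ Finset.Icc n N, ‖a k - a (k + r)‖ +
         ∑ k ∈ Finset.Icc (N + 1) (N + r), ‖a k‖ +
         ∑ k ∈ Finset.Icc n (n + r - 1), ‖a k‖) := by
  have hπ := Real.pi_pos
  have hr0 : (0:ℝ) < r := by exact_mod_cast hr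
  set D : ℝ := 2 * (l + 1) * Real.pi - r * x with hDdef
  have h1 : (2*(l:ℝ)+1) * Real.pi < x * r := (div_lt_iff₀ hr0).mp hx₁
  have h2 : x * (r:ℝ) < (2*(l:ℝ)+2) * Real.pi := (lt_div_iff₀ hr0).mp hx₂
  have hxr : (r:ℝ) * x = x * r := mul_comm _ _
  have hD0 : 0 < D := by rw [hDdef, hxr]; nlinarith
  have hDπ : D < Real.pi := by rw [hDdef, hxr]; nlinarith
  have harg : (r:ℝ) * x / 2 = ((l+1 : ℤ):ℝ) * Real.pi - D/2 := by
    rw [hDdef]; push_cast; ring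
  have hsinD0 : 0 ≤ Real.sin (D/2) :=
    Real.sin_nonneg_of_nonneg_of_le_pi (by linarith) (by linarith)
  have habs : |Real.sin ((r:ℝ) * x / 2)| = Real.sin (D/2) := by
    rw [harg, Real.sin_int_mul_pi_sub, abs_neg, abs_mul]
    rcases Int.even_or_odd (l+1) with h | h
    · rw [h.neg_one_zpow]
      simp [abs_of_nonneg hsinD0]
    · rw [h.neg_one_zpow]
      simp [abs_of_nonneg hsinD0]
  have hjordan : D / Real.pi ≤ Real.sin (D/2) := by
    have := Real.mul_le_sin (x := D/2) (by linarith) (by linarith)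
    calc D / Real.pi = 2 / Real.pi * (D/2) := by field_simp
      _ ≤ _ := this
  -- cosine coefficients
  set u : ℕ → ℝ := fun k => Real.cos ((k:ℝ) * x - r * x / 2) with hu
  set c : ℝ := 2 * Real.sin ((r:ℝ)*x/2) with hc
  have hkey : ∀ k : ℕ, (Real.sin ((k:ℝ)*x) : ℂ) * (c : ℂ)
      = ((u k : ℝ) : ℂ) - ((u (k+r) : ℝ) : ℂ) := by
    intro k
    have h' : u k - u (k+r) = Real.sin ((k:ℝ)*x) * c := by
      simp only [hu, hc]
      push_cast
      rw [show ((k:ℝ)+r) * x - r*x/2 = (k:ℝ)*x + r*x/2 by ring, Real.cos_sub, Real.cos_add]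
      ring
    rw [show (((u k : ℝ) : ℂ) - ((u (k+r) : ℝ) : ℂ)) = ((u k - u (k+r) : ℝ) : ℂ) by push_cast; ring,
      h']
    push_cast
    ring
  set g : ℕ → ℂ := fun k => a k * ((u k : ℝ) : ℂ) with hg
  set S : ℂ := ∑ k ∈ Finset.Icc n N, a k * (Real.sin ((k:ℝ) * x) : ℂ) with hS
  have hshift : ∑ k ∈ Finset.Icc n N, g (k + r) = ∑ k ∈ Finset.Icc (n+r) (N+r), g k := by
    rw [← Finset.map_add_right_Icc, Finset.sum_map]
    rfl
  have hcons1 : ∑ k ∈ Finset.Icc n N, g k + ∑ k ∈ Finset.Icc (N+1) (N+r), g k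
      = ∑ k ∈ Finset.Icc n (N+r), g k := by
    rw [← Finset.Ico_add_one_right_eq_Icc n N, ← Finset.Ico_add_one_right_eq_Icc (N+1),
      ← Finset.Ico_add_one_right_eq_Icc n (N+r)]
    exact Finset.sum_Ico_consecutive _ (by omega) (by omega)
  have hcons2 : ∑ k ∈ Finset.Icc n (n+r-1), g k + ∑ k ∈ Finset.Icc (n+r) (N+r), g k
      = ∑ k ∈ Finset.Icc n (N+r), g k := by
    rw [← Finset.Ico_add_one_right_eq_Icc n (n+r-1), ← Finset.Ico_add_one_right_eq_Icc (n+r),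
      ← Finset.Ico_add_one_right_eq_Icc n (N+r), show n+r-1+1 = n+r from by omega]
    exact Finset.sum_Ico_consecutive _ (by omega) (by omega)
  have hident : S * (c : ℂ)
      = ∑ k ∈ Finset.Icc n (n+r-1), g k - ∑ k ∈ Finset.Icc (N+1) (N+r), g k
        - ∑ k ∈ Finset.Icc n N, (a k - a (k+r)) * ((u (k+r) : ℝ) : ℂ) := by
    have e1 : S * (c : ℂ)
        = ∑ k ∈ Finset.Icc n N, (g k - a k * ((u (k+r) : ℝ) : ℂ)) := by
      rw [hS, Finset.sum_mul]
      refine Finset.sum_congr rfl fun k _ => ?_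
      rw [mul_assoc, hkey k, hg]
      ring
    rw [e1, Finset.sum_sub_distrib]
    have e2 : ∑ k ∈ Finset.Icc n N, a k * ((u (k+r) : ℝ) : ℂ)
        = ∑ k ∈ Finset.Icc n N, (a k - a (k+r)) * ((u (k+r) : ℝ) : ℂ)
          + ∑ k ∈ Finset.Icc n N, g (k+r) := by
      rw [← Finset.sum_add_distrib]
      refine Finset.sum_congr rfl fun k _ => ?_
      simp only [hg]; ring
    rw [e2, hshift]
    linear_combination hcons1 - hcons2
  set T : ℝ := ∑ k ∈ Finset.Icc n N, ‖a k - a (k + r)‖ +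
         ∑ k ∈ Finset.Icc (N + 1) (N + r), ‖a k‖ +
         ∑ k ∈ Finset.Icc n (n + r - 1), ‖a k‖ with hT
  have hub : ∀ k, ‖((u k : ℝ) : ℂ)‖ ≤ 1 := by
    intro k
    rw [Complex.norm_real, Real.norm_eq_abs]
    exact Real.abs_cos_le_one _
  have b1 : ‖∑ k ∈ Finset.Icc n (n+r-1), g k‖ ≤ ∑ k ∈ Finset.Icc n (n+r-1), ‖a k‖ := by
    refine (norm_sum_le _ _).trans (Finset.sum_le_sum fun k _ => ?_)
    rw [hg]
    calc ‖a k * ((u k : ℝ) : ℂ)‖ = ‖a k‖ * ‖((u k : ℝ) : ℂ)‖ := norm_mul _ _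
      _ ≤ ‖a k‖ * 1 := by have := hub k; have := norm_nonneg (a k); nlinarith
      _ = ‖a k‖ := mul_one _
  have b2 : ‖∑ k ∈ Finset.Icc (N+1) (N+r), g k‖ ≤ ∑ k ∈ Finset.Icc (N+1) (N+r), ‖a k‖ := by
    refine (norm_sum_le _ _).trans (Finset.sum_le_sum fun k _ => ?_)
    rw [hg]
    calc ‖a k * ((u k : ℝ) : ℂ)‖ = ‖a k‖ * ‖((u k : ℝ) : ℂ)‖ := norm_mul _ _
      _ ≤ ‖a k‖ * 1 := by have := hub k; have := norm_nonneg (a k); nlinarith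
      _ = ‖a k‖ := mul_one _
  have b3 : ‖∑ k ∈ Finset.Icc n N, (a k - a (k+r)) * ((u (k+r) : ℝ) : ℂ)‖
      ≤ ∑ k ∈ Finset.Icc n N, ‖a k - a (k+r)‖ := by
    refine (norm_sum_le _ _).trans (Finset.sum_le_sum fun k _ => ?_)
    calc ‖(a k - a (k+r)) * ((u (k+r) : ℝ) : ℂ)‖
        = ‖a k - a (k+r)‖ * ‖((u (k+r) : ℝ) : ℂ)‖ := norm_mul _ _
      _ ≤ ‖a k - a (k+r)‖ * 1 := by
          have := hub (k+r); have := norm_nonneg (a k - a (k+r)); nlinarith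
      _ = ‖a k - a (k+r)‖ := mul_one _
  have hbound : ‖S‖ * |c| ≤ T := by
    have hnormc : ‖S * (c : ℂ)‖ = ‖S‖ * |c| := by
      rw [norm_mul, Complex.norm_real, Real.norm_eq_abs]
    rw [← hnormc, hident]
    set A := ∑ k ∈ Finset.Icc n (n+r-1), g k
    set B := ∑ k ∈ Finset.Icc (N+1) (N+r), g k
    set C := ∑ k ∈ Finset.Icc n N, (a k - a (k+r)) * ((u (k+r) : ℝ) : ℂ)
    calc ‖A - B - C‖ ≤ ‖A - B‖ + ‖C‖ := norm_sub_le _ _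
      _ ≤ ‖A‖ + ‖B‖ + ‖C‖ := by have := norm_sub_le A B; linarith
      _ ≤ T := by rw [hT]; linarith
  have hT0 : 0 ≤ T := by
    rw [hT]
    have p1 : (0:ℝ) ≤ ∑ k ∈ Finset.Icc n N, ‖a k - a (k + r)‖ :=
      Finset.sum_nonneg fun k _ => norm_nonneg _
    have p2 : (0:ℝ) ≤ ∑ k ∈ Finset.Icc (N+1) (N+r), ‖a k‖ :=
      Finset.sum_nonneg fun k _ => norm_nonneg _
    have p3 : (0:ℝ) ≤ ∑ k ∈ Finset.Icc n (n+r-1), ‖a k‖ :=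
      Finset.sum_nonneg fun k _ => norm_nonneg _
    linarith
  have hclow : 2 * (D / Real.pi) ≤ |c| := by
    rw [hc, abs_mul, abs_two, habs]
    linarith
  have hclow0 : 0 < 2 * (D / Real.pi) := by positivity
  have h2' : ‖S‖ * (2 * (D / Real.pi)) ≤ T :=
    le_trans (mul_le_mul_of_nonneg_left hclow (norm_nonneg S)) hbound
  rw [div_mul_eq_mul_div, le_div_iff₀ (by positivity : (0:ℝ) < 2 * D)]
  calc ‖S‖ * (2 * D) = (‖S‖ * (2 * (D / Real.pi))) * Real.pi := by field_simp
    _ ≤ T * Real.pi := mul_le_mul_of_nonneg_right h2' hπ.le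
    _ = Real.pi * T := mul_comm _ _

end
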